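/- For every x ∈ ℝ, (1/π) ∫_{-∞}^{∞} ln(1/|x−t|) · 1/(1+t²) dt = − ln √(x²+1). In other words, the logarithmic potential of the Cauchy probability measure dμ(t) = (1/π)·dt/(1+t²) is U^μ(x) = ln(1/√(x²+1)). -/

import Mathlib

/-! With `t = tan θ` the Cauchy density `dt / (1 + t²)` becomes `dθ` on `(-π/2, π/2)`. Writing
`α = arctan x` and `r = √(x² + 1)`, one has `x - tan θ = r sin (α - θ) / cos θ`, so the potential
turns into `∫ (-log r - log |sin (α - θ)| + log cos θ) dθ`. Both trigonometric terms integrate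
`log |sin|` over a full period `π`, hence cancel, leaving `-π log r`.
Since Mathlib's `log` is even, the absolute values are dropped in the formal statements. -/

open MeasureTheory Real Set

lemma hasDerivWithinAt_tan_of_mem_Ioo {θ : ℝ} (hθ : θ ∈ Ioo (-(π / 2)) (π / 2)) :
    HasDerivWithinAt tan (1 / cos θ ^ 2) (Ioo (-(π / 2)) (π / 2)) θ :=
  (hasDerivAt_tan (cos_pos_of_mem_Ioo hθ).ne').hasDerivWithinAt

lemma abs_one_div_cos_sq_smul_div_one_add_tan_sq (g : ℝ → ℝ) {θ : ℝ} (hθ : cos θ ≠ 0) :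
    |1 / cos θ ^ 2| • (g (tan θ) / (1 + tan θ ^ 2)) = g (tan θ) := by
  rw [smul_eq_mul, abs_of_nonneg (by positivity), div_eq_mul_inv (g _), inv_one_add_tan_sq hθ]
  field_simp

theorem integrable_div_one_add_sq_iff (g : ℝ → ℝ) :
    Integrable (fun t => g t / (1 + t ^ 2)) ↔
      IntegrableOn (fun θ => g (tan θ)) (Ioo (-(π / 2)) (π / 2)) := by
  rw [← integrableOn_univ, ← image_tan_Ioo, integrableOn_image_iff_integrableOn_abs_deriv_smul
    measurableSet_Ioo (fun _ => hasDerivWithinAt_tan_of_mem_Ioo) injOn_tan]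
  exact integrableOn_congr_fun (fun θ hθ =>
    abs_one_div_cos_sq_smul_div_one_add_tan_sq g (cos_pos_of_mem_Ioo hθ).ne') measurableSet_Ioo

theorem integral_div_one_add_sq_eq (g : ℝ → ℝ) :
    ∫ t, g t / (1 + t ^ 2) = ∫ θ in Ioo (-(π / 2)) (π / 2), g (tan θ) := by
  rw [← setIntegral_univ, ← image_tan_Ioo, integral_image_eq_integral_abs_deriv_smul
    measurableSet_Ioo (fun _ => hasDerivWithinAt_tan_of_mem_Ioo) injOn_tan]
  exact setIntegral_congr_fun measurableSet_Ioo fun θ hθ =>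
    abs_one_div_cos_sq_smul_div_one_add_tan_sq g (cos_pos_of_mem_Ioo hθ).ne'

lemma periodic_log_sin : Function.Periodic (fun θ => log (sin θ)) π := fun θ => by
  simp only [sin_add_pi, log_neg_eq_log]

lemma intervalIntegrable_log_sin_sub (α : ℝ) {a b : ℝ} :
    IntervalIntegrable (fun θ => log (sin (α - θ))) volume a b := by
  simpa only [sub_sub_cancel, Function.comp_apply] using
    (intervalIntegrable_log_sin (a := α - a) (b := α - b)).comp_sub_left α

lemma integral_log_sin_sub (α : ℝ) :
    ∫ θ in -(π / 2)..π / 2, log (sin (α - θ)) = ∫ θ in 0..π, log (sin θ) := by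
  have h := periodic_log_sin.intervalIntegral_add_eq (α - π / 2) 0
  rw [show α - π / 2 + π = α - -(π / 2) by ring, zero_add] at h
  rw [intervalIntegral.integral_comp_sub_left (fun θ => log (sin θ)), h]

lemma integral_log_cos_eq_integral_log_sin :
    ∫ θ in -(π / 2)..π / 2, log (cos θ) = ∫ θ in 0..π, log (sin θ) := by
  simp only [← sin_add_pi_div_two]
  rw [intervalIntegral.integral_comp_add_right (fun θ => log (sin θ))]
  ring_nf

lemma sub_tan_eq (x : ℝ) {θ : ℝ} (hθ : cos θ ≠ 0) :
    x - tan θ = √(x ^ 2 + 1) * sin (arctan x - θ) / cos θ := by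
  have hr : √(x ^ 2 + 1) ≠ 0 := by positivity
  rw [sin_sub, sin_arctan, cos_arctan, add_comm 1, tan_eq_sin_div_cos]
  field_simp

lemma log_inv_abs_sub_tan (x : ℝ) {θ : ℝ} (hcos : 0 < cos θ) (hsin : sin (arctan x - θ) ≠ 0) :
    log (1 / |x - tan θ|) = -log √(x ^ 2 + 1) - log (sin (arctan x - θ)) + log (cos θ) := by
  rw [sub_tan_eq x hcos.ne', one_div, log_inv, log_abs, log_div (by positivity) hcos.ne',
    log_mul (by positivity) hsin]
  ring

lemma log_inv_abs_sub_tan_ae_eq (x : ℝ) :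
    (fun θ => log (1 / |x - tan θ|)) =ᵐ[volume.restrict (Ioo (-(π / 2)) (π / 2))]
      fun θ => -log √(x ^ 2 + 1) - log (sin (arctan x - θ)) + log (cos θ) := by
  filter_upwards [ae_restrict_mem measurableSet_Ioo,
    ae_restrict_of_ae ((countable_singleton (arctan x)).ae_notMem volume)] with θ hθ hne
  have hα := arctan_mem_Ioo x
  refine log_inv_abs_sub_tan x (cos_pos_of_mem_Ioo hθ) fun hsin => hne ?_
  rw [sin_eq_zero_iff_of_lt_of_lt (by linarith [hθ.2, hα.1]) (by linarith [hθ.1, hα.2]),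
    sub_eq_zero] at hsin
  exact hsin.symm

lemma integrableOn_log_potential_tan (x : ℝ) :
    IntegrableOn (fun θ => -log √(x ^ 2 + 1) - log (sin (arctan x - θ)) + log (cos θ))
      (Ioo (-(π / 2)) (π / 2)) := by
  rw [← intervalIntegrable_iff_integrableOn_Ioo_of_le (by linarith [pi_pos])]
  exact (intervalIntegrable_const.sub (intervalIntegrable_log_sin_sub _)).add
    intervalIntegrable_log_cos

lemma integral_log_potential_tan (x : ℝ) :
    ∫ θ in Ioo (-(π / 2)) (π / 2), (-log √(x ^ 2 + 1) - log (sin (arctan x - θ)) + log (cos θ)) =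
      -π * log √(x ^ 2 + 1) := by
  rw [← integral_Ioc_eq_integral_Ioo, ← intervalIntegral.integral_of_le (by linarith [pi_pos]),
    intervalIntegral.integral_add, intervalIntegral.integral_sub, intervalIntegral.integral_const,
    integral_log_sin_sub, integral_log_cos_eq_integral_log_sin, smul_eq_mul]
  · ring
  exacts [intervalIntegrable_const, intervalIntegrable_log_sin_sub _,
    intervalIntegrable_const.sub (intervalIntegrable_log_sin_sub _), intervalIntegrable_log_cos]

theorem log_potential_cauchy (x : ℝ) :
    Integrable (fun t => Real.log (1 / |x - t|) / (1 + t ^ 2)) ∧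
    (1 / Real.pi) * ∫ t : ℝ, Real.log (1 / |x - t|) / (1 + t ^ 2) =
      - Real.log (Real.sqrt (x ^ 2 + 1)) := by
  have hae := log_inv_abs_sub_tan_ae_eq x
  refine ⟨(integrable_div_one_add_sq_iff _).2 ((integrableOn_log_potential_tan x).congr hae.symm),
    ?_⟩
  rw [integral_div_one_add_sq_eq, integral_congr_ae hae, integral_log_potential_tan]
  field_simp
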